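/- Let 𝒮 = {T_1,…,T_m} be a finite collection of piecewise C² uniformly expanding maps of [0,1]: for each T ∈ 𝒮 there is a finite partition 𝒜_T of [0,1] into intervals such that on each I ∈ 𝒜_T, T restricted to I extends to a strictly monotone C² function on the closure of I, and λ := min_{T∈𝒮} min_{I∈𝒜_T} inf_{x∈Ī} |T'(x)| > 1. For ω ∈ {1,…,m}^ℤ write T_ω^n := T_{ω_{n−1}} ∘ ⋯ ∘ T_{ω_0}, and let m denote Lebesgue measure on [0,1]. Then there exists C > 0 such that for all ω, all n ≥ 1 and all ε > 0: m({ x ∈ [0,1] : |T_ω^n(x) − x| ≤ ε }) ≤ C ε. -/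

import Mathlib

/-!
On an interval of monotonicity `I` of `F = T_ω^n` we have `|F' - 1| ≥ (1 - 1/λ) |F'|`, so the
points of `I` that move by at most `ε` form a set of length at most `2λε/(λ-1) · sup_I 1/|F'|`.
It remains to bound the total weight `W(F) = Σ_I sup_I 1/|F'|` uniformly in `ω` and `n`.

Write `T_ω^n = B ∘ F` with `B` a block of `n₀` maps, where `λ^n₀ ≥ 4`. An interval of monotonicity
`J` of `B ∘ F` is sent by `F` into an interval of monotonicity `K` of `B`. If `F(J) = K`, then
`B ∘ F` maps `J` onto `B(K)`, and bounded distortion gives `sup_J 1/|(B ∘ F)'| ≤ e^D |J| / δ_B`,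
where `δ_B` bounds the sizes of the images of the branches of `B` from below; these lengths `|J|`
add up to at most `1`. Otherwise `K` contains an endpoint of the image of the interval of `F`
containing `J`, which happens for at most two `J` per interval of `F`, each of weight at most
that interval's weight divided by `4`. Hence `W(B ∘ F) ≤ W(F)/2 + e^D/δ_B`, while the distortion
constants satisfy `D(B ∘ F) ≤ D(B) + D(F)/4`. There are only finitely many blocks, so `D(B)` and
`δ_B` are uniform and both recursions stay bounded.
-/

open MeasureTheory Filter Set Topology

noncomputable section

/-- The two-sided shift space on `m` symbols. -/
abbrev Om (m : ℕ) := ℤ → Fin m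

/-- Lebesgue measure on `[0,1]`. -/
def mLeb : Measure ℝ := volume.restrict (Set.Icc 0 1)

/-- `T` is a piecewise `C²` uniformly expanding map of `[0,1]` with expansion constant `lam`:
there is a finite partition `0 = a_0 < a_1 < ⋯ < a_N = 1` of `[0,1]` into intervals such
that on each piece `T` agrees with a strictly monotone `C²` function on the closed piece,
whose derivative is at least `lam` in absolute value. -/
def PiecewiseC2Expanding (T : ℝ → ℝ) (lam : ℝ) : Prop :=
  ∃ (N : ℕ) (a : ℕ → ℝ), 1 ≤ N ∧ a 0 = 0 ∧ a N = 1 ∧ (∀ i < N, a i < a (i + 1)) ∧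
    ∀ i < N, ∃ g : ℝ → ℝ,
      ContDiffOn ℝ 2 g (Set.Icc (a i) (a (i + 1))) ∧
      Set.EqOn T g (Set.Ioo (a i) (a (i + 1))) ∧
      (StrictMonoOn g (Set.Icc (a i) (a (i + 1))) ∨
        StrictAntiOn g (Set.Icc (a i) (a (i + 1)))) ∧
      ∀ x ∈ Set.Icc (a i) (a (i + 1)),
        lam ≤ |derivWithin g (Set.Icc (a i) (a (i + 1))) x|

/-- The random composition `T_ω^n = T_{ω_{n−1}} ∘ ⋯ ∘ T_{ω_0}`. -/
def randComp {m : ℕ} (T : Fin m → ℝ → ℝ) (ω : Om m) : ℕ → ℝ → ℝ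
  | 0 => fun x => x
  | n + 1 => fun x => T (ω (n : ℤ)) (randComp T ω n x)

theorem Finset.exists_pos_forall_le {ι : Type*} (t : Finset ι) {f : ι → ℝ}
    (hf : ∀ i ∈ t, 0 < f i) : ∃ δ, 0 < δ ∧ ∀ i ∈ t, δ ≤ f i := by
  by_cases ht : t.Nonempty
  · exact ⟨t.inf' ht f, (Finset.lt_inf'_iff ht).2 hf, fun i hi => Finset.inf'_le f hi⟩
  · exact ⟨1, one_pos, fun i hi => absurd ⟨i, hi⟩ ht⟩

section Calculus

variable {f : ℝ → ℝ} {s : Set ℝ}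

theorem strictMonoOn_or_strictAntiOn_of_deriv_ne_zero (hs : Convex ℝ s) (hso : IsOpen s)
    (hf : ∀ x ∈ s, DifferentiableAt ℝ f x) (hf' : ∀ x ∈ s, deriv f x ≠ 0) :
    StrictMonoOn f s ∨ StrictAntiOn f s := by
  have hcont : ContinuousOn f s := fun x hx => (hf x hx).continuousAt.continuousWithinAt
  rcases hasDerivWithinAt_forall_lt_or_forall_gt_of_forall_ne hs
    (fun x hx => (hf x hx).hasDerivAt.hasDerivWithinAt) hf' with h | h
  · exact .inr (strictAntiOn_of_deriv_neg hs hcont (by rwa [hso.interior_eq]))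
  · exact .inl (strictMonoOn_of_deriv_pos hs hcont (by rwa [hso.interior_eq]))

theorem mul_abs_sub_le_abs_sub_of_le_abs_deriv {Λ : ℝ} (hs : Convex ℝ s)
    (hf : ∀ x ∈ s, DifferentiableAt ℝ f x) (hΛ : ∀ x ∈ s, Λ ≤ |deriv f x|)
    {x y : ℝ} (hx : x ∈ s) (hy : y ∈ s) : Λ * |y - x| ≤ |f y - f x| := by
  wlog hxy : x < y generalizing x y
  · rcases (not_lt.1 hxy).eq_or_lt with rfl | hyx
    · simp
    · simpa only [abs_sub_comm] using this hy hx hyx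
  have hsub : Icc x y ⊆ s := hs.ordConnected.out hx hy
  obtain ⟨c, hc, hslope⟩ := exists_deriv_eq_slope f hxy
    (fun z hz => (hf z (hsub hz)).continuousAt.continuousWithinAt)
    (fun z hz => (hf z (hsub (Ioo_subset_Icc_self hz))).differentiableWithinAt)
  have hyx : 0 < y - x := sub_pos.2 hxy
  rw [eq_div_iff hyx.ne'] at hslope
  rw [← hslope, abs_mul, abs_of_pos hyx]
  exact mul_le_mul_of_nonneg_right (hΛ c (hsub (Ioo_subset_Icc_self hc))) hyx.le

theorem abs_sub_le_of_abs_sub_self_le {Λ w ε : ℝ} (hΛ1 : 1 < Λ) (hs : Convex ℝ s)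
    (hf : ∀ x ∈ s, DifferentiableAt ℝ f x) (hΛ : ∀ x ∈ s, Λ ≤ |deriv f x|)
    (hw : ∀ x ∈ s, |deriv f x|⁻¹ ≤ w) {x y : ℝ} (hx : x ∈ s) (hy : y ∈ s)
    (hxε : |f x - x| ≤ ε) (hyε : |f y - y| ≤ ε) :
    |x - y| ≤ 2 * Λ / (Λ - 1) * w * ε := by
  have hΛ0 : 0 < Λ := by linarith
  have hw0 : 0 < w := (inv_pos.2 (hΛ0.trans_le (hΛ x hx))).trans_le (hw x hx)
  -- `f - id` expands by at least `(Λ - 1) / (Λ w)`, since `|f' - 1| ≥ |f'| (1 - 1/Λ)`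
  have hg : ∀ z ∈ s, (Λ - 1) / (Λ * w) ≤ |deriv (fun t => f t - t) z| := by
    intro z hz
    have hd : deriv (fun t => f t - t) z = deriv f z - 1 :=
      ((hf z hz).hasDerivAt.sub (hasDerivAt_id z)).deriv
    have hfz := hΛ z hz
    have hwz : 1 ≤ w * |deriv f z| := by
      have := hw z hz
      rw [inv_le_iff_one_le_mul₀ (hΛ0.trans_le hfz)] at this
      linarith
    rw [hd, div_le_iff₀ (by positivity)]
    calc Λ - 1 ≤ (|deriv f z| - 1) * (Λ * w) := by nlinarith
      _ ≤ |deriv f z - 1| * (Λ * w) := by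
          gcongr
          simpa using abs_sub_abs_le_abs_sub (deriv f z) 1
  have hgd : ∀ z ∈ s, DifferentiableAt ℝ (fun t => f t - t) z :=
    fun z hz => (hf z hz).sub differentiableAt_id
  have hexp := mul_abs_sub_le_abs_sub_of_le_abs_deriv hs hgd hg hy hx
  have hsub : |(f x - x) - (f y - y)| ≤ 2 * ε := by
    rw [abs_le] at hxε hyε ⊢
    constructor <;> linarith
  calc |x - y| ≤ 2 * ε / ((Λ - 1) / (Λ * w)) := by
        rw [le_div_iff₀ (by positivity)]
        linarith
    _ = 2 * Λ / (Λ - 1) * w * ε := by field_simp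

theorem abs_le_exp_mul_abs_of_abs_log_sub_le {a b D t : ℝ} (hb : b ≠ 0) (hD : 0 ≤ D)
    (ht : |t| ≤ 1) (h : |Real.log |a| - Real.log (|b|)| ≤ D * |t|) :
    |a| ≤ Real.exp D * |b| := by
  rcases eq_or_ne a 0 with rfl | ha
  · simp only [abs_zero]; positivity
  have hlog : Real.log |a| ≤ D + Real.log |b| := by
    have := (abs_le.1 (h.trans (mul_le_of_le_one_right hD ht))).2
    linarith
  calc |a| = Real.exp (Real.log |a|) := (Real.exp_log (abs_pos.2 ha)).symm
    _ ≤ Real.exp (D + Real.log |b|) := Real.exp_le_exp.2 hlog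
    _ = Real.exp D * |b| := by rw [Real.exp_add, Real.exp_log (abs_pos.2 hb)]

theorem diam_image_Ioo_pos {a b Λ : ℝ} (hab : a < b) (hΛ0 : 0 < Λ)
    (hf : ∀ x ∈ Ioo a b, DifferentiableAt ℝ f x) (hΛ : ∀ x ∈ Ioo a b, Λ ≤ |deriv f x|)
    (hbdd : Bornology.IsBounded (f '' Ioo a b)) : 0 < Metric.diam (f '' Ioo a b) := by
  obtain ⟨x, hax, hxb⟩ := exists_between hab
  obtain ⟨y, hxy, hyb⟩ := exists_between hxb
  have hx : x ∈ Ioo a b := ⟨hax, hxb⟩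
  have hy : y ∈ Ioo a b := ⟨hax.trans hxy, hyb⟩
  have hexp := mul_abs_sub_le_abs_sub_of_le_abs_deriv (convex_Ioo a b) hf hΛ hx hy
  have hpos : 0 < Λ * |y - x| := mul_pos hΛ0 (abs_pos.2 (sub_ne_zero.2 hxy.ne'))
  calc 0 < |f y - f x| := hpos.trans_le hexp
    _ = dist (f y) (f x) := (Real.dist_eq _ _).symm
    _ ≤ _ := Metric.dist_le_diam_of_mem hbdd (mem_image_of_mem f hy) (mem_image_of_mem f hx)

theorem exists_pos_le_diam_image_Ioo {ι : Type*} (t : Finset ι) {lo hi : ι → ℝ} {Λ : ℝ}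
    (hΛ0 : 0 < Λ) (hlt : ∀ i ∈ t, lo i < hi i)
    (hf : ∀ i ∈ t, ∀ x ∈ Ioo (lo i) (hi i), DifferentiableAt ℝ f x)
    (hΛ : ∀ i ∈ t, ∀ x ∈ Ioo (lo i) (hi i), Λ ≤ |deriv f x|)
    (hmaps : ∀ i ∈ t, MapsTo f (Ioo (lo i) (hi i)) (Icc 0 1)) :
    ∃ δ, 0 < δ ∧ ∀ i ∈ t, δ ≤ Metric.diam (f '' Ioo (lo i) (hi i)) :=
  t.exists_pos_forall_le fun i hi => diam_image_Ioo_pos (hlt i hi) hΛ0 (hf i hi) (hΛ i hi)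
    ((Metric.isBounded_Icc (0 : ℝ) 1).subset (hmaps i hi).image_subset)

theorem volume_le_ofReal_of_forall_sub_le {c : ℝ} (h : ∀ x ∈ s, ∀ y ∈ s, x - y ≤ c) :
    volume s ≤ ENNReal.ofReal c := by
  refine (Real.volume_le_diam s).trans (Metric.ediam_le fun x hx y hy => ?_)
  rw [edist_dist, Real.dist_eq]
  exact ENNReal.ofReal_le_ofReal (abs_sub_le_iff.2 ⟨h x hx y hy, h y hy x hx⟩)

theorem sum_sub_le_one_of_pairwiseDisjoint {ι : Type*} {t : Finset ι} {a b : ι → ℝ}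
    (hab : ∀ i ∈ t, a i ≤ b i) (hsub : ∀ i ∈ t, Ioo (a i) (b i) ⊆ Icc 0 1)
    (hd : (t : Set ι).PairwiseDisjoint fun i => Ioo (a i) (b i)) :
    ∑ i ∈ t, (b i - a i) ≤ 1 := by
  have hvol : ENNReal.ofReal (∑ i ∈ t, (b i - a i)) ≤ ENNReal.ofReal 1 := by
    calc ENNReal.ofReal (∑ i ∈ t, (b i - a i))
        = ∑ i ∈ t, volume (Ioo (a i) (b i)) := by
          rw [ENNReal.ofReal_sum_of_nonneg fun i hi => sub_nonneg.2 (hab i hi)]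
          simp only [Real.volume_Ioo]
      _ = volume (⋃ i ∈ t, Ioo (a i) (b i)) :=
          (measure_biUnion_finset hd fun _ _ => measurableSet_Ioo).symm
      _ ≤ volume (Icc (0 : ℝ) 1) := measure_mono (iUnion₂_subset hsub)
      _ = ENNReal.ofReal 1 := by rw [Real.volume_Icc, sub_zero]
  exact (ENNReal.ofReal_le_ofReal_iff zero_le_one).1 hvol

theorem inv_abs_deriv_le_of_le_diam_image {u v D δ : ℝ} (hδ : 0 < δ) (hD : 0 ≤ D)
    (hf : ∀ x ∈ Ioo u v, DifferentiableAt ℝ f x) (hf0 : ∀ x ∈ Ioo u v, deriv f x ≠ 0)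
    (hmaps : MapsTo f (Ioo u v) (Icc 0 1))
    (hlog : ∀ x ∈ Ioo u v, ∀ y ∈ Ioo u v,
      |Real.log |deriv f x| - Real.log (|deriv f y|)| ≤ D * |f x - f y|)
    (hdiam : δ ≤ Metric.diam (f '' Ioo u v)) {x : ℝ} (hx : x ∈ Ioo u v) :
    |deriv f x|⁻¹ ≤ Real.exp D * (v - u) / δ := by
  have hdx : 0 < |deriv f x| := abs_pos.2 (hf0 x hx)
  set L := Real.exp D * |deriv f x|
  have hderiv : ∀ z ∈ Ioo u v, ‖deriv f z‖ ≤ L := fun z hz => by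
    refine abs_le_exp_mul_abs_of_abs_log_sub_le (hf0 x hx) hD ?_ (hlog z hz x hx)
    have hz' := hmaps hz; have hx' := hmaps hx
    exact abs_sub_le_iff.2 ⟨by linarith [hz'.2, hx'.1], by linarith [hz'.1, hx'.2]⟩
  have hL : Metric.diam (f '' Ioo u v) ≤ L * (v - u) := by
    refine Metric.diam_le_of_forall_dist_le
      (mul_nonneg (by positivity) (by linarith [hx.1, hx.2])) ?_
    rintro _ ⟨y, hy, rfl⟩ _ ⟨z, hz, rfl⟩
    have hlip := (convex_Ioo u v).norm_image_sub_le_of_norm_deriv_le hf hderiv hz hy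
    rw [Real.norm_eq_abs, Real.norm_eq_abs] at hlip
    rw [Real.dist_eq]
    exact hlip.trans (mul_le_mul_of_nonneg_left
      (abs_sub_le_iff.2 ⟨by linarith [hy.2, hz.1], by linarith [hy.1, hz.2]⟩) (by positivity))
  rw [le_div_iff₀ hδ, inv_mul_le_iff₀ hdx]
  linarith

end Calculus

theorem Finset.card_le_two_of_pairwiseDisjoint {ι α : Type*} {t : Finset ι} {K : ι → Set α}
    {p q : α} (hd : (t : Set ι).PairwiseDisjoint K) (hpq : ∀ i ∈ t, p ∈ K i ∨ q ∈ K i) :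
    t.card ≤ 2 := by
  classical
  have hinj : Set.InjOn (fun i => decide (p ∈ K i)) t := by
    intro i hi j hj hij
    by_contra hne
    have hdisj := hd hi hj hne
    by_cases hpi : p ∈ K i
    · have hpj : p ∈ K j := by simpa [hpi] using hij.symm
      exact Set.disjoint_left.1 hdisj hpi hpj
    · have hpj : p ∉ K j := by simpa [hpi] using hij.symm
      exact Set.disjoint_left.1 hdisj ((hpq i hi).resolve_left hpi) ((hpq j hj).resolve_left hpj)
  simpa using Finset.card_le_card_of_injOn _ (fun i _ => Finset.mem_univ _) hinj

theorem Set.OrdConnected.csInf_mem_or_csSup_mem {α : Type*} [ConditionallyCompleteLinearOrder α]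
    {J K : Set α} (hJ : J.OrdConnected) (hb : BddBelow J) (ha : BddAbove J) (hK : K.OrdConnected)
    (hKJ : (K ∩ J).Nonempty) (hnot : ¬K ⊆ J) : sInf J ∈ K ∨ sSup J ∈ K := by
  obtain ⟨k, hkK, hkJ⟩ := hKJ
  obtain ⟨l, hlK, hlJ⟩ := Set.not_subset.1 hnot
  rcases lt_or_gt_of_ne (ne_of_mem_of_not_mem hkJ hlJ) with hkl | hlk
  · refine .inr (hK.out hkK hlK ⟨le_csSup ha hkJ, csSup_le ⟨k, hkJ⟩ fun j hj => ?_⟩)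
    by_contra! hlj
    exact hlJ (hJ.out hkJ hj ⟨hkl.le, hlj.le⟩)
  · refine .inl (hK.out hlK hkK ⟨le_csInf ⟨k, hkJ⟩ fun j hj => ?_, csInf_le hb hkJ⟩)
    by_contra! hjl
    exact hlJ (hJ.out hj hkJ ⟨hjl.le, hlk.le⟩)

theorem IsOpen.eq_Ioo_csInf_csSup {s : Set ℝ} (ho : IsOpen s) (hc : IsConnected s)
    (hb : BddBelow s) (ha : BddAbove s) : s = Ioo (sInf s) (sSup s) := by
  refine Subset.antisymm (fun x hx => ?_) (hc.Ioo_csInf_csSup_subset hb ha)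
  obtain ⟨ε, hε, hball⟩ := Metric.isOpen_iff.1 ho x hx
  have hmem : ∀ z, |z - x| < ε → z ∈ s := fun z hz => hball (by rwa [Metric.mem_ball, Real.dist_eq])
  constructor
  · calc sInf s ≤ x - ε / 2 := csInf_le hb (hmem _ (by rw [abs_lt]; constructor <;> linarith))
      _ < x := by linarith
  · calc x < x + ε / 2 := by linarith
      _ ≤ sSup s := le_csSup ha (hmem _ (by rw [abs_lt]; constructor <;> linarith))

/-- The intervals `(lo i, hi i)` are the intervals of monotonicity of `F`, on which `F` itself
serves as the branch; `weight i` bounds `sup 1 / |F'|` over the `i`-th interval. -/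
structure ExpandingBranches (F : ℝ → ℝ) : Type 1 where
  ι : Type
  pieces : Finset ι
  lo : ι → ℝ
  hi : ι → ℝ
  weight : ι → ℝ
  expansion : ℝ
  distortion : ℝ
  minImage : ℝ
  one_lt_expansion : 1 < expansion
  distortion_nonneg : 0 ≤ distortion
  minImage_pos : 0 < minImage
  lo_lt_hi : ∀ i ∈ pieces, lo i < hi i
  piece_subset : ∀ i ∈ pieces, Ioo (lo i) (hi i) ⊆ Icc 0 1
  pairwiseDisjoint : (pieces : Set ι).PairwiseDisjoint fun i => Ioo (lo i) (hi i)
  finite_gaps : (Icc 0 1 \ ⋃ i ∈ pieces, Ioo (lo i) (hi i)).Finite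
  mapsTo : MapsTo F (Icc 0 1) (Icc 0 1)
  differentiableAt : ∀ i ∈ pieces, ∀ x ∈ Ioo (lo i) (hi i), DifferentiableAt ℝ F x
  expansion_le : ∀ i ∈ pieces, ∀ x ∈ Ioo (lo i) (hi i), expansion ≤ |deriv F x|
  abs_log_deriv_sub_le : ∀ i ∈ pieces, ∀ x ∈ Ioo (lo i) (hi i), ∀ y ∈ Ioo (lo i) (hi i),
    |Real.log |deriv F x| - Real.log (|deriv F y|)| ≤ distortion * |F x - F y|
  minImage_le : ∀ i ∈ pieces, minImage ≤ Metric.diam (F '' Ioo (lo i) (hi i))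
  inv_deriv_le_weight : ∀ i ∈ pieces, ∀ x ∈ Ioo (lo i) (hi i), |deriv F x|⁻¹ ≤ weight i

namespace ExpandingBranches

variable {F : ℝ → ℝ} (X : ExpandingBranches F)

abbrev piece (i : X.ι) : Set ℝ := Ioo (X.lo i) (X.hi i)

def totalWeight : ℝ := ∑ i ∈ X.pieces, X.weight i

theorem expansion_pos : 0 < X.expansion := one_pos.trans X.one_lt_expansion

theorem deriv_ne_zero {i : X.ι} (hi : i ∈ X.pieces) {x : ℝ} (hx : x ∈ X.piece i) :
    deriv F x ≠ 0 :=
  abs_pos.1 (X.expansion_pos.trans_le (X.expansion_le i hi x hx))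

theorem weight_nonneg {i : X.ι} (hi : i ∈ X.pieces) : 0 ≤ X.weight i := by
  obtain ⟨x, hx⟩ := nonempty_Ioo.2 (X.lo_lt_hi i hi)
  exact (inv_nonneg.2 (abs_nonneg _)).trans (X.inv_deriv_le_weight i hi x hx)

theorem totalWeight_nonneg : 0 ≤ X.totalWeight :=
  Finset.sum_nonneg fun _ hi => X.weight_nonneg hi

theorem continuousOn_piece {i : X.ι} (hi : i ∈ X.pieces) : ContinuousOn F (X.piece i) :=
  fun x hx => (X.differentiableAt i hi x hx).continuousAt.continuousWithinAt

theorem strictMonoOn_or_strictAntiOn {i : X.ι} (hi : i ∈ X.pieces) :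
    StrictMonoOn F (X.piece i) ∨ StrictAntiOn F (X.piece i) :=
  strictMonoOn_or_strictAntiOn_of_deriv_ne_zero (convex_Ioo _ _) isOpen_Ioo
    (X.differentiableAt i hi) fun _ hx => X.deriv_ne_zero hi hx

theorem mul_abs_sub_le {i : X.ι} (hi : i ∈ X.pieces) {x y : ℝ} (hx : x ∈ X.piece i)
    (hy : y ∈ X.piece i) : X.expansion * |y - x| ≤ |F y - F x| :=
  mul_abs_sub_le_abs_sub_of_le_abs_deriv (convex_Ioo _ _) (X.differentiableAt i hi)
    (X.expansion_le i hi) hx hy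

theorem injOn_piece {i : X.ι} (hi : i ∈ X.pieces) : InjOn F (X.piece i) := by
  intro x hx y hy hxy
  by_contra hne
  have := X.mul_abs_sub_le hi hx hy
  rw [hxy, sub_self, abs_zero] at this
  exact this.not_gt (mul_pos X.expansion_pos (abs_pos.2 (sub_ne_zero.2 (Ne.symm hne))))

theorem image_piece_subset {i : X.ι} (hi : i ∈ X.pieces) : F '' X.piece i ⊆ Icc 0 1 :=
  (X.mapsTo.mono_left (X.piece_subset i hi)).image_subset

theorem volume_nearFixed_le {lam ε : ℝ} (hlam : 1 < lam) (hlamΛ : lam ≤ X.expansion)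
    (hε : 0 ≤ ε) : volume ({x | |F x - x| ≤ ε} ∩ Icc 0 1) ≤
      ENNReal.ofReal (2 * lam / (lam - 1) * X.totalWeight * ε) := by
  set c : X.ι → ℝ := fun i => 2 * lam / (lam - 1) * X.weight i * ε
  have hc0 : ∀ i ∈ X.pieces, 0 ≤ c i := fun i hi => by
    have := X.weight_nonneg hi
    have : 0 < lam - 1 := sub_pos.2 hlam
    positivity
  have hpiece : ∀ i ∈ X.pieces, volume ({x | |F x - x| ≤ ε} ∩ X.piece i) ≤ ENNReal.ofReal (c i) :=
    fun i hi => volume_le_ofReal_of_forall_sub_le fun x hx y hy =>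
      (le_abs_self _).trans <| abs_sub_le_of_abs_sub_self_le hlam (convex_Ioo _ _)
        (X.differentiableAt i hi) (fun z hz => hlamΛ.trans (X.expansion_le i hi z hz))
        (X.inv_deriv_le_weight i hi) hx.2 hy.2 hx.1 hy.1
  have hcover : {x | |F x - x| ≤ ε} ∩ Icc 0 1 ⊆
      (Icc 0 1 \ ⋃ i ∈ X.pieces, X.piece i) ∪ ⋃ i ∈ X.pieces, {x | |F x - x| ≤ ε} ∩ X.piece i := by
    rintro x ⟨hxε, hx⟩
    by_cases hmem : x ∈ ⋃ i ∈ X.pieces, X.piece i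
    · obtain ⟨i, hi, hxi⟩ := mem_iUnion₂.1 hmem
      exact .inr (mem_iUnion₂.2 ⟨i, hi, hxε, hxi⟩)
    · exact .inl ⟨hx, hmem⟩
  calc volume ({x | |F x - x| ≤ ε} ∩ Icc 0 1)
      ≤ volume (Icc 0 1 \ ⋃ i ∈ X.pieces, X.piece i) +
          volume (⋃ i ∈ X.pieces, {x | |F x - x| ≤ ε} ∩ X.piece i) :=
        (measure_mono hcover).trans (measure_union_le _ _)
    _ ≤ ∑ i ∈ X.pieces, ENNReal.ofReal (c i) := by
        rw [X.finite_gaps.measure_zero, zero_add]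
        exact (measure_biUnion_finset_le _ _).trans (Finset.sum_le_sum hpiece)
    _ = ENNReal.ofReal (2 * lam / (lam - 1) * X.totalWeight * ε) := by
        rw [← ENNReal.ofReal_sum_of_nonneg hc0, totalWeight, Finset.mul_sum, Finset.sum_mul]

section Comp

variable {S : ℝ → ℝ} (Y : ExpandingBranches S)

def child (p : X.ι × Y.ι) : Set ℝ := X.piece p.1 ∩ F ⁻¹' Y.piece p.2

open Classical in
def childPieces : Finset (X.ι × Y.ι) :=
  (X.pieces ×ˢ Y.pieces).filter fun p => (X.child Y p).Nonempty

variable {X Y}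

theorem mem_childPieces {p : X.ι × Y.ι} (hp : p ∈ X.childPieces Y) :
    p.1 ∈ X.pieces ∧ p.2 ∈ Y.pieces ∧ (X.child Y p).Nonempty := by
  simpa [childPieces, and_assoc] using hp

theorem child_eq_Ioo {p : X.ι × Y.ι} (hp : p ∈ X.childPieces Y) :
    X.child Y p = Ioo (sInf (X.child Y p)) (sSup (X.child Y p)) := by
  obtain ⟨h1, -, hne⟩ := mem_childPieces hp
  have hopen : IsOpen (X.child Y p) :=
    (X.continuousOn_piece h1).isOpen_inter_preimage isOpen_Ioo isOpen_Ioo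
  have hord : (X.child Y p).OrdConnected := by
    obtain ⟨u, hu, heq⟩ := (X.strictMonoOn_or_strictAntiOn h1).elim
      (fun h => ordConnected_Ioo.preimage_monotoneOn h.monotoneOn)
      (fun h => ordConnected_Ioo.preimage_antitoneOn h.antitoneOn)
    rw [child, heq]
    exact ordConnected_Ioo.inter hu
  exact hopen.eq_Ioo_csInf_csSup ⟨hne, hord.isPreconnected⟩
    ⟨X.lo p.1, fun _ hx => hx.1.1.le⟩ ⟨X.hi p.1, fun _ hx => hx.1.2.le⟩

theorem sInf_child_lt_sSup {p : X.ι × Y.ι} (hp : p ∈ X.childPieces Y) :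
    sInf (X.child Y p) < sSup (X.child Y p) := by
  have hne := (mem_childPieces hp).2.2
  rw [child_eq_Ioo hp] at hne
  exact nonempty_Ioo.1 hne

theorem child_subset_unit {p : X.ι × Y.ι} (hp : p ∈ X.childPieces Y) :
    X.child Y p ⊆ Icc 0 1 :=
  inter_subset_left.trans (X.piece_subset _ (mem_childPieces hp).1)

theorem pairwiseDisjoint_child :
    (X.childPieces Y : Set (X.ι × Y.ι)).PairwiseDisjoint (X.child Y) := by
  intro p hp q hq hpq
  obtain ⟨hp1, hp2, -⟩ := mem_childPieces hp
  obtain ⟨hq1, hq2, -⟩ := mem_childPieces hq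
  by_cases h : p.1 = q.1
  · have h2 : p.2 ≠ q.2 := fun h2 => hpq (Prod.ext h h2)
    exact Set.disjoint_left.2 fun x hxp hxq =>
      Set.disjoint_left.1 (Y.pairwiseDisjoint hp2 hq2 h2) hxp.2 hxq.2
  · exact (X.pairwiseDisjoint hp1 hq1 h).mono inter_subset_left inter_subset_left

theorem finite_gaps_child :
    (Icc 0 1 \ ⋃ p ∈ X.childPieces Y, X.child Y p).Finite := by
  have hfin : ∀ i ∈ X.pieces,
      (X.piece i ∩ F ⁻¹' (Icc 0 1 \ ⋃ j ∈ Y.pieces, Y.piece j)).Finite := fun i hi =>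
    Set.Finite.of_finite_image (Y.finite_gaps.subset (image_subset_iff.2 inter_subset_right))
      ((X.injOn_piece hi).mono inter_subset_left)
  refine (X.finite_gaps.union (X.pieces.finite_toSet.biUnion hfin)).subset ?_
  rintro x ⟨hx, hxn⟩
  by_cases hpar : x ∈ ⋃ i ∈ X.pieces, X.piece i
  · obtain ⟨i, hi, hxi⟩ := mem_iUnion₂.1 hpar
    refine .inr (mem_iUnion₂.2 ⟨i, hi, hxi, X.image_piece_subset hi ⟨x, hxi, rfl⟩, ?_⟩)
    intro hFx
    obtain ⟨j, hj, hxj⟩ := mem_iUnion₂.1 hFx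
    have hij : (i, j) ∈ X.childPieces Y := by
      simp only [childPieces, Finset.mem_filter, Finset.mem_product]
      exact ⟨⟨hi, hj⟩, x, hxi, hxj⟩
    exact hxn (mem_iUnion₂.2 ⟨(i, j), hij, hxi, hxj⟩)
  · exact .inl ⟨hx, hpar⟩

theorem differentiableAt_comp {p : X.ι × Y.ι} (hp : p ∈ X.childPieces Y) {x : ℝ}
    (hx : x ∈ X.child Y p) : DifferentiableAt ℝ (S ∘ F) x :=
  (Y.differentiableAt _ (mem_childPieces hp).2.1 _ hx.2).comp x
    (X.differentiableAt _ (mem_childPieces hp).1 _ hx.1)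

theorem deriv_comp_eq {p : X.ι × Y.ι} (hp : p ∈ X.childPieces Y) {x : ℝ}
    (hx : x ∈ X.child Y p) : deriv (S ∘ F) x = deriv S (F x) * deriv F x :=
  deriv_comp x (Y.differentiableAt _ (mem_childPieces hp).2.1 _ hx.2)
    (X.differentiableAt _ (mem_childPieces hp).1 _ hx.1)

theorem expansion_mul_le_abs_deriv_comp {p : X.ι × Y.ι} (hp : p ∈ X.childPieces Y) {x : ℝ}
    (hx : x ∈ X.child Y p) : X.expansion * Y.expansion ≤ |deriv (S ∘ F) x| := by
  rw [deriv_comp_eq hp hx, abs_mul, mul_comm]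
  exact mul_le_mul (Y.expansion_le _ (mem_childPieces hp).2.1 _ hx.2)
    (X.expansion_le _ (mem_childPieces hp).1 _ hx.1) X.expansion_pos.le (abs_nonneg _)

variable (X Y) in
def compDistortion : ℝ := Y.distortion + X.distortion / Y.expansion

theorem compDistortion_nonneg : 0 ≤ X.compDistortion Y :=
  add_nonneg Y.distortion_nonneg (div_nonneg X.distortion_nonneg Y.expansion_pos.le)

theorem abs_log_deriv_comp_sub_le {p : X.ι × Y.ι} (hp : p ∈ X.childPieces Y) {x y : ℝ}
    (hx : x ∈ X.child Y p) (hy : y ∈ X.child Y p) :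
    |Real.log |deriv (S ∘ F) x| - Real.log (|deriv (S ∘ F) y|)| ≤
      X.compDistortion Y * |(S ∘ F) x - (S ∘ F) y| := by
  obtain ⟨h1, h2, -⟩ := mem_childPieces hp
  have hlog : ∀ z ∈ X.child Y p, Real.log |deriv (S ∘ F) z| =
      Real.log |deriv S (F z)| + Real.log |deriv F z| := fun z hz => by
    rw [deriv_comp_eq hp hz, abs_mul, Real.log_mul (abs_ne_zero.2 (Y.deriv_ne_zero h2 hz.2))
      (abs_ne_zero.2 (X.deriv_ne_zero h1 hz.1))]
  have hdY := Y.abs_log_deriv_sub_le _ h2 _ hx.2 _ hy.2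
  have hdX := X.abs_log_deriv_sub_le _ h1 _ hx.1 _ hy.1
  have hexp : Y.expansion * |F x - F y| ≤ |S (F x) - S (F y)| := Y.mul_abs_sub_le h2 hy.2 hx.2
  have hinner : X.distortion * |F x - F y| ≤
      X.distortion / Y.expansion * |S (F x) - S (F y)| := by
    rw [div_mul_eq_mul_div, le_div_iff₀ Y.expansion_pos, mul_assoc]
    exact mul_le_mul_of_nonneg_left (by linarith) X.distortion_nonneg
  rw [hlog x hx, hlog y hy, compDistortion]
  calc _ ≤ |Real.log |deriv S (F x)| - Real.log (|deriv S (F y)|)| +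
        |Real.log |deriv F x| - Real.log (|deriv F y|)| := by
        rw [add_sub_add_comm]; exact abs_add_le _ _
    _ ≤ _ := by simp only [Function.comp, add_mul]; linarith

theorem mem_child_of_mem_Ioo {p : X.ι × Y.ι} (hp : p ∈ X.childPieces Y) {x : ℝ}
    (hx : x ∈ Ioo (sInf (X.child Y p)) (sSup (X.child Y p))) : x ∈ X.child Y p := by
  rwa [child_eq_Ioo hp]

theorem pairwiseDisjoint_Ioo_child : (X.childPieces Y : Set (X.ι × Y.ι)).PairwiseDisjoint
    fun p => Ioo (sInf (X.child Y p)) (sSup (X.child Y p)) := by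
  intro p hp q hq hpq
  change Disjoint (Ioo _ _) (Ioo _ _)
  rw [← child_eq_Ioo hp, ← child_eq_Ioo hq]
  exact pairwiseDisjoint_child hp hq hpq

variable (X Y) in
theorem sum_length_child_le_one :
    ∑ p ∈ X.childPieces Y, (sSup (X.child Y p) - sInf (X.child Y p)) ≤ 1 :=
  sum_sub_le_one_of_pairwiseDisjoint (fun p hp => (sInf_child_lt_sSup hp).le)
    (fun p hp => by rw [← child_eq_Ioo hp]; exact child_subset_unit hp) pairwiseDisjoint_Ioo_child

open Classical in
/-- Each of these `Y`-pieces contains an endpoint of `F '' X.piece i`. -/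
theorem card_filter_not_subset_le_two (i : X.ι) :
    (((X.childPieces Y).filter fun p : X.ι × Y.ι => ¬Y.piece p.2 ⊆ F '' X.piece p.1).filter
      fun p => p.1 = i).card ≤ 2 := by
  classical
  refine Finset.card_le_two_of_pairwiseDisjoint (K := fun p => Y.piece p.2)
    (p := sInf (F '' X.piece i)) (q := sSup (F '' X.piece i)) ?_ fun p hp => ?_
  · intro p hp q hq hpq
    simp only [Finset.mem_coe, Finset.mem_filter] at hp hq
    exact Y.pairwiseDisjoint (mem_childPieces hp.1.1).2.1 (mem_childPieces hq.1.1).2.1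
      fun h => hpq (Prod.ext (hp.2.trans hq.2.symm) h)
  · simp only [Finset.mem_filter] at hp
    obtain ⟨⟨hpc, hnot⟩, rfl⟩ := hp
    obtain ⟨h1, -, x, hx⟩ := mem_childPieces hpc
    have himg := X.image_piece_subset h1
    exact ((isPreconnected_Ioo.image F (X.continuousOn_piece h1)).ordConnected
      |>.csInf_mem_or_csSup_mem (bddBelow_Icc.mono himg) (bddAbove_Icc.mono himg)
        ordConnected_Ioo ⟨F x, hx.2, x, hx.1, rfl⟩ hnot)

variable (X Y) in
open Classical in
/-- A child whose `Y`-piece lies inside the image of its `X`-piece is mapped onto a whole image of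
a branch of `Y`, so bounded distortion bounds `1 / |(S ∘ F)'|` on it by a multiple of its length. -/
def childWeight (p : X.ι × Y.ι) : ℝ :=
  if Y.piece p.2 ⊆ F '' X.piece p.1 then
    Real.exp (X.compDistortion Y) * (sSup (X.child Y p) - sInf (X.child Y p)) / Y.minImage
  else X.weight p.1 / Y.expansion

theorem inv_abs_deriv_comp_le_of_subset {p : X.ι × Y.ι} (hp : p ∈ X.childPieces Y)
    (hfull : Y.piece p.2 ⊆ F '' X.piece p.1) {x : ℝ} (hx : x ∈ X.child Y p) :
    |deriv (S ∘ F) x|⁻¹ ≤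
      Real.exp (X.compDistortion Y) * (sSup (X.child Y p) - sInf (X.child Y p)) / Y.minImage := by
  obtain ⟨-, h2, -⟩ := mem_childPieces hp
  have hC := child_eq_Ioo hp
  have hmem : ∀ {z}, z ∈ Ioo (sInf (X.child Y p)) (sSup (X.child Y p)) → z ∈ X.child Y p :=
    fun hz => by rwa [hC]
  have himage : (S ∘ F) '' Ioo (sInf (X.child Y p)) (sSup (X.child Y p)) = S '' Y.piece p.2 := by
    rw [← hC, image_comp, child, image_inter_preimage, inter_eq_right.2 hfull]
  refine inv_abs_deriv_le_of_le_diam_image Y.minImage_pos compDistortion_nonneg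
    (fun z hz => differentiableAt_comp hp (hmem hz))
    (fun z hz => abs_pos.1 ((mul_pos X.expansion_pos Y.expansion_pos).trans_le
      (expansion_mul_le_abs_deriv_comp hp (hmem hz))))
    (fun z hz => Y.image_piece_subset h2 ⟨F z, (hmem hz).2, rfl⟩)
    (fun y hy z hz => abs_log_deriv_comp_sub_le hp (hmem hy) (hmem hz))
    (himage ▸ Y.minImage_le _ h2) (by rwa [← hC])

theorem inv_abs_deriv_comp_le_childWeight {p : X.ι × Y.ι} (hp : p ∈ X.childPieces Y) {x : ℝ}
    (hx : x ∈ X.child Y p) : |deriv (S ∘ F) x|⁻¹ ≤ X.childWeight Y p := by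
  obtain ⟨h1, h2, -⟩ := mem_childPieces hp
  rw [childWeight]
  split_ifs with hfull
  · exact inv_abs_deriv_comp_le_of_subset hp hfull hx
  · rw [deriv_comp_eq hp hx, abs_mul, mul_inv, div_eq_mul_inv, mul_comm (X.weight _)]
    exact mul_le_mul (inv_anti₀ Y.expansion_pos (Y.expansion_le _ h2 _ hx.2))
      (X.inv_deriv_le_weight _ h1 _ hx.1) (inv_nonneg.2 (abs_nonneg _))
      (inv_nonneg.2 Y.expansion_pos.le)

open Classical in
theorem sum_childWeight_filter_not_subset_le :
    ∑ p ∈ (X.childPieces Y).filter (fun p : X.ι × Y.ι => ¬Y.piece p.2 ⊆ F '' X.piece p.1),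
      X.childWeight Y p ≤ 2 / Y.expansion * X.totalWeight := by
  set s := (X.childPieces Y).filter fun p : X.ι × Y.ι => ¬Y.piece p.2 ⊆ F '' X.piece p.1
  have hw : ∀ p ∈ s, X.childWeight Y p = X.weight p.1 / Y.expansion := fun p hp => by
    rw [childWeight, if_neg (Finset.mem_filter.1 hp).2]
  rw [Finset.sum_congr rfl hw, ← Finset.sum_fiberwise_of_maps_to
    (g := Prod.fst) (t := X.pieces) fun p hp => (mem_childPieces (Finset.mem_filter.1 hp).1).1,
    totalWeight, Finset.mul_sum]
  refine Finset.sum_le_sum fun i hi => ?_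
  rw [Finset.sum_congr rfl fun p hp => by rw [(Finset.mem_filter.1 hp).2], Finset.sum_const,
    nsmul_eq_mul, mul_div_assoc', div_mul_eq_mul_div]
  have := X.weight_nonneg hi
  gcongr
  · exact Y.expansion_pos.le
  · exact_mod_cast card_filter_not_subset_le_two i

open Classical in
theorem sum_childWeight_filter_subset_le :
    ∑ p ∈ (X.childPieces Y).filter (fun p : X.ι × Y.ι => Y.piece p.2 ⊆ F '' X.piece p.1),
      X.childWeight Y p ≤ Real.exp (X.compDistortion Y) / Y.minImage := by
  set s := (X.childPieces Y).filter fun p : X.ι × Y.ι => Y.piece p.2 ⊆ F '' X.piece p.1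
  have hw : ∀ p ∈ s, X.childWeight Y p =
      Real.exp (X.compDistortion Y) / Y.minImage * (sSup (X.child Y p) - sInf (X.child Y p)) :=
    fun p hp => by rw [childWeight, if_pos (Finset.mem_filter.1 hp).2]; ring
  rw [Finset.sum_congr rfl hw, ← Finset.mul_sum]
  refine mul_le_of_le_one_right (div_nonneg (Real.exp_pos _).le Y.minImage_pos.le)
    (le_trans ?_ (sum_length_child_le_one X Y))
  exact Finset.sum_le_sum_of_subset_of_nonneg (Finset.filter_subset _ _)
    fun p hp _ => sub_nonneg.2 (sInf_child_lt_sSup hp).le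

theorem sum_childWeight_le : ∑ p ∈ X.childPieces Y, X.childWeight Y p ≤
    2 / Y.expansion * X.totalWeight + Real.exp (X.compDistortion Y) / Y.minImage := by
  classical
  rw [← Finset.sum_filter_add_sum_filter_not _ fun p => Y.piece p.2 ⊆ F '' X.piece p.1, add_comm]
  exact add_le_add sum_childWeight_filter_not_subset_le sum_childWeight_filter_subset_le

variable (X Y) in
theorem exists_comp : ∃ Z : ExpandingBranches (S ∘ F),
    Z.expansion = X.expansion * Y.expansion ∧ Z.distortion = X.compDistortion Y ∧
      Z.totalWeight ≤ 2 / Y.expansion * X.totalWeight +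
        Real.exp (X.compDistortion Y) / Y.minImage := by
  obtain ⟨δ, hδ, hδle⟩ := exists_pos_le_diam_image_Ioo (X.childPieces Y)
    (mul_pos X.expansion_pos Y.expansion_pos) (fun p hp => sInf_child_lt_sSup hp)
    (fun p hp x hx => differentiableAt_comp hp (mem_child_of_mem_Ioo hp hx))
    (fun p hp x hx => expansion_mul_le_abs_deriv_comp hp (mem_child_of_mem_Ioo hp hx))
    fun p hp x hx => Y.image_piece_subset (mem_childPieces hp).2.1
      ⟨F x, (mem_child_of_mem_Ioo hp hx).2, rfl⟩
  refine ⟨{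
    ι := X.ι × Y.ι
    pieces := X.childPieces Y
    lo := fun p => sInf (X.child Y p)
    hi := fun p => sSup (X.child Y p)
    weight := X.childWeight Y
    expansion := X.expansion * Y.expansion
    distortion := X.compDistortion Y
    minImage := δ
    one_lt_expansion := one_lt_mul_of_lt_of_le X.one_lt_expansion Y.one_lt_expansion.le
    distortion_nonneg := compDistortion_nonneg
    minImage_pos := hδ
    lo_lt_hi := fun p hp => sInf_child_lt_sSup hp
    piece_subset := fun p hp => by rw [← child_eq_Ioo hp]; exact child_subset_unit hp
    pairwiseDisjoint := pairwiseDisjoint_Ioo_child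
    finite_gaps := by
      rw [iUnion₂_congr fun p hp => (child_eq_Ioo hp).symm]
      exact finite_gaps_child
    mapsTo := Y.mapsTo.comp X.mapsTo
    differentiableAt := fun p hp x hx => differentiableAt_comp hp (mem_child_of_mem_Ioo hp hx)
    expansion_le := fun p hp x hx =>
      expansion_mul_le_abs_deriv_comp hp (mem_child_of_mem_Ioo hp hx)
    abs_log_deriv_sub_le := fun p hp x hx y hy =>
      abs_log_deriv_comp_sub_le hp (mem_child_of_mem_Ioo hp hx) (mem_child_of_mem_Ioo hp hy)
    minImage_le := hδle
    inv_deriv_le_weight := fun p hp x hx =>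
      inv_abs_deriv_comp_le_childWeight hp (mem_child_of_mem_Ioo hp hx) },
    rfl, rfl, sum_childWeight_le⟩

end Comp

end ExpandingBranches

section PiecewiseC2

theorem monotoneOn_Iic_of_lt_succ {a : ℕ → ℝ} {N : ℕ} (h : ∀ i < N, a i < a (i + 1)) :
    MonotoneOn a (Iic N) := by
  have hmono : Monotone fun k => a (min k N) := monotone_nat_of_le_succ fun k => by
    rcases lt_or_ge k N with hk | hk
    · rw [min_eq_left hk.le, min_eq_left hk]; exact (h k hk).le
    · rw [min_eq_right hk, min_eq_right (hk.trans (Nat.le_succ k))]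
  intro i hi j hj hij
  simpa [min_eq_left (mem_Iic.1 hi), min_eq_left (mem_Iic.1 hj)] using hmono hij

theorem pairwiseDisjoint_Ioo_of_forall_lt_succ {a : ℕ → ℝ} {N : ℕ} (h : ∀ i < N, a i < a (i + 1)) :
    (Finset.range N : Set ℕ).PairwiseDisjoint fun i => Ioo (a i) (a (i + 1)) := by
  have key : ∀ i j, i < j → j < N → Disjoint (Ioo (a i) (a (i + 1))) (Ioo (a j) (a (j + 1))) :=
    fun i j hij hj => Set.disjoint_left.2 fun x hxi hxj => by
      linarith [hxi.2, hxj.1, monotoneOn_Iic_of_lt_succ h (mem_Iic.2 (hij.trans hj : i + 1 ≤ N))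
        (mem_Iic.2 hj.le) hij]
  intro i hi j hj hij
  simp only [Finset.coe_range, mem_Iio] at hi hj
  rcases lt_or_gt_of_ne hij with hlt | hlt
  · exact key i j hlt hj
  · exact (key j i hlt hi).symm

theorem Ioo_subset_Icc_of_forall_lt_succ {a : ℕ → ℝ} {N i : ℕ} (ha0 : a 0 = 0) (haN : a N = 1)
    (h : ∀ i < N, a i < a (i + 1)) (hi : i < N) : Ioo (a i) (a (i + 1)) ⊆ Icc 0 1 := by
  have hmono := monotoneOn_Iic_of_lt_succ h
  refine Ioo_subset_Icc_self.trans (Icc_subset_Icc ?_ ?_)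
  · exact ha0 ▸ hmono (mem_Iic.2 (Nat.zero_le N)) (mem_Iic.2 hi.le) (Nat.zero_le i)
  · exact haN ▸ hmono (mem_Iic.2 hi) (mem_Iic.2 le_rfl) hi

theorem finite_Icc_diff_iUnion_Ioo {a : ℕ → ℝ} {N : ℕ} (ha0 : a 0 = 0) (haN : a N = 1) :
    (Icc 0 1 \ ⋃ i ∈ Finset.range N, Ioo (a i) (a (i + 1))).Finite := by
  classical
  refine ((Finset.range (N + 1)).image a).finite_toSet.subset fun x ⟨hx, hxn⟩ => ?_
  by_contra hxa
  simp only [Finset.coe_image, Finset.coe_range, mem_image, mem_Iio, not_exists, not_and] at hxa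
  have hxN : x < a N := lt_of_le_of_ne (haN ▸ hx.2) fun h => hxa N N.lt_succ_self h.symm
  have hex : ∃ j, x < a j := ⟨N, hxN⟩
  obtain ⟨k, hk⟩ : ∃ k, Nat.find hex = k + 1 :=
    Nat.exists_eq_succ_of_ne_zero fun h => (ha0 ▸ hx.1).not_gt (h ▸ Nat.find_spec hex)
  have hkN : k + 1 ≤ N := hk ▸ Nat.find_min' hex hxN
  have hak : a k ≤ x := not_lt.1 (Nat.find_min hex (by omega))
  refine hxn (mem_iUnion₂.2 ⟨k, Finset.mem_range.2 hkN, ?_, hk ▸ Nat.find_spec hex⟩)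
  exact lt_of_le_of_ne hak fun h => hxa k (by omega) h

variable {T G : ℝ → ℝ} {a b lam : ℝ}

theorem hasDerivAt_of_eqOn_Ioo (hG : ContDiffOn ℝ 2 G (Icc a b)) (hTG : EqOn T G (Ioo a b))
    {x : ℝ} (hx : x ∈ Ioo a b) : HasDerivAt T (derivWithin G (Icc a b) x) x := by
  have hGx := ((hG.differentiableOn (by norm_num)) x (Ioo_subset_Icc_self hx)).hasDerivWithinAt
  exact (hGx.hasDerivAt (Icc_mem_nhds hx.1 hx.2)).congr_of_eventuallyEq
    (Filter.eventually_of_mem (Ioo_mem_nhds hx.1 hx.2) hTG)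

/-- `log |G'|` has derivative `G'' / G'`, bounded since `G''` is continuous on the compact
interval and `|G'| ≥ lam`. -/
theorem exists_abs_log_derivWithin_sub_le (hab : a < b) (hlam : 0 < lam)
    (hG : ContDiffOn ℝ 2 G (Icc a b)) (hd : ∀ x ∈ Icc a b, lam ≤ |derivWithin G (Icc a b) x|) :
    ∃ K, 0 ≤ K ∧ ∀ x ∈ Ioo a b, ∀ y ∈ Ioo a b,
      |Real.log |derivWithin G (Icc a b) x| - Real.log (|derivWithin G (Icc a b) y|)| ≤
        K * |x - y| := by
  set h := derivWithin G (Icc a b)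
  have h1 : ContDiffOn ℝ 1 h (Icc a b) := hG.derivWithin (uniqueDiffOn_Icc hab) (by norm_num)
  obtain ⟨M, hM⟩ := isCompact_Icc.exists_bound_of_continuousOn
    (h1.continuousOn_derivWithin (uniqueDiffOn_Icc hab) le_rfl)
  have hM0 : 0 ≤ M := (norm_nonneg _).trans (hM a (left_mem_Icc.2 hab.le))
  refine ⟨M / lam, div_nonneg hM0 hlam.le, fun x hx y hy => ?_⟩
  have hderiv : ∀ z ∈ Ioo a b, HasDerivWithinAt (fun t => Real.log (h t))
      (derivWithin h (Icc a b) z / h z) (Ioo a b) z := fun z hz =>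
    (((h1.differentiableOn one_ne_zero) z (Ioo_subset_Icc_self hz)).hasDerivWithinAt.hasDerivAt
      (Icc_mem_nhds hz.1 hz.2)).hasDerivWithinAt.log
      (abs_pos.1 (hlam.trans_le (hd z (Ioo_subset_Icc_self hz))))
  have hbound : ∀ z ∈ Ioo a b, ‖derivWithin h (Icc a b) z / h z‖ ≤ M / lam := fun z hz => by
    rw [norm_div, Real.norm_eq_abs (h z)]
    exact div_le_div₀ hM0 (hM z (Ioo_subset_Icc_self hz)) hlam (hd z (Ioo_subset_Icc_self hz))
  have := (convex_Ioo a b).norm_image_sub_le_of_norm_hasDerivWithin_le hderiv hbound hy hx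
  simpa only [Real.log_abs, Real.norm_eq_abs] using this

theorem exists_abs_log_deriv_sub_le (hab : a < b) (hlam : 0 < lam)
    (hG : ContDiffOn ℝ 2 G (Icc a b)) (hTG : EqOn T G (Ioo a b))
    (hd : ∀ x ∈ Icc a b, lam ≤ |derivWithin G (Icc a b) x|) :
    ∃ K, 0 ≤ K ∧ ∀ x ∈ Ioo a b, ∀ y ∈ Ioo a b,
      |Real.log |deriv T x| - Real.log (|deriv T y|)| ≤ K * |T x - T y| := by
  obtain ⟨K, hK0, hK⟩ := exists_abs_log_derivWithin_sub_le hab hlam hG hd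
  have hderiv : ∀ x ∈ Ioo a b, deriv T x = derivWithin G (Icc a b) x := fun x hx =>
    (hasDerivAt_of_eqOn_Ioo hG hTG hx).deriv
  refine ⟨K / lam, div_nonneg hK0 hlam.le, fun x hx y hy => ?_⟩
  have hexp := mul_abs_sub_le_abs_sub_of_le_abs_deriv (convex_Ioo a b)
    (fun x hx => (hasDerivAt_of_eqOn_Ioo hG hTG hx).differentiableAt)
    (fun x hx => (hderiv x hx).symm ▸ hd x (Ioo_subset_Icc_self hx)) hy hx
  rw [hderiv x hx, hderiv y hy, div_mul_eq_mul_div, le_div_iff₀ hlam]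
  calc _ ≤ K * |x - y| * lam := mul_le_mul_of_nonneg_right (hK x hx y hy) hlam.le
    _ = K * (lam * |x - y|) := by ring
    _ ≤ K * |T x - T y| := mul_le_mul_of_nonneg_left hexp hK0

theorem ExpandingBranches.exists_of_piecewiseC2Expanding (hlam : 1 < lam)
    (hT : PiecewiseC2Expanding T lam) (hmaps : MapsTo T (Icc 0 1) (Icc 0 1)) :
    ∃ X : ExpandingBranches T, X.expansion = lam := by
  obtain ⟨N, a, -, ha0, haN, hmono, hbr⟩ := hT
  have hlam0 : 0 < lam := one_pos.trans hlam
  have hderiv : ∀ i < N, ∀ x ∈ Ioo (a i) (a (i + 1)),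
      DifferentiableAt ℝ T x ∧ lam ≤ |deriv T x| := fun i hi x hx => by
    obtain ⟨G, hG, hTG, -, hd⟩ := hbr i hi
    have := hasDerivAt_of_eqOn_Ioo hG hTG hx
    exact ⟨this.differentiableAt, this.deriv ▸ hd x (Ioo_subset_Icc_self hx)⟩
  have hdist : ∀ i, ∃ K, 0 ≤ K ∧ (i < N → ∀ x ∈ Ioo (a i) (a (i + 1)),
      ∀ y ∈ Ioo (a i) (a (i + 1)),
        |Real.log |deriv T x| - Real.log (|deriv T y|)| ≤ K * |T x - T y|) := fun i => by
    by_cases hi : i < N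
    · obtain ⟨G, hG, hTG, -, hd⟩ := hbr i hi
      obtain ⟨K, hK0, hK⟩ := exists_abs_log_deriv_sub_le (hmono i hi) hlam0 hG hTG hd
      exact ⟨K, hK0, fun _ => hK⟩
    · exact ⟨0, le_rfl, fun h => absurd h hi⟩
  choose K hK0 hK using hdist
  have hsub : ∀ i ∈ Finset.range N, Ioo (a i) (a (i + 1)) ⊆ Icc 0 1 := fun i hi =>
    Ioo_subset_Icc_of_forall_lt_succ ha0 haN hmono (Finset.mem_range.1 hi)
  obtain ⟨δ, hδ, hδle⟩ := exists_pos_le_diam_image_Ioo (Finset.range N) hlam0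
    (fun i hi => hmono i (Finset.mem_range.1 hi))
    (fun i hi x hx => (hderiv i (Finset.mem_range.1 hi) x hx).1)
    (fun i hi x hx => (hderiv i (Finset.mem_range.1 hi) x hx).2)
    fun i hi => hmaps.mono_left (hsub i hi)
  refine ⟨{
    ι := ℕ
    pieces := Finset.range N
    lo := a
    hi := fun i => a (i + 1)
    weight := fun _ => lam⁻¹
    expansion := lam
    distortion := ∑ i ∈ Finset.range N, K i
    minImage := δ
    one_lt_expansion := hlam
    distortion_nonneg := Finset.sum_nonneg fun i _ => hK0 i
    minImage_pos := hδ
    lo_lt_hi := fun i hi => hmono i (Finset.mem_range.1 hi)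
    piece_subset := hsub
    pairwiseDisjoint := pairwiseDisjoint_Ioo_of_forall_lt_succ hmono
    finite_gaps := finite_Icc_diff_iUnion_Ioo ha0 haN
    mapsTo := hmaps
    differentiableAt := fun i hi x hx => (hderiv i (Finset.mem_range.1 hi) x hx).1
    expansion_le := fun i hi x hx => (hderiv i (Finset.mem_range.1 hi) x hx).2
    abs_log_deriv_sub_le := fun i hi x hx y hy =>
      (hK i (Finset.mem_range.1 hi) x hx y hy).trans (mul_le_mul_of_nonneg_right
        (Finset.single_le_sum (fun j _ => hK0 j) hi) (abs_nonneg _))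
    minImage_le := hδle
    inv_deriv_le_weight := fun i hi x hx =>
      inv_anti₀ hlam0 (hderiv i (Finset.mem_range.1 hi) x hx).2 }, rfl⟩

end PiecewiseC2

namespace ExpandingBranches

theorem exists_uniform_bounds {S : Set (ℝ → ℝ)} (hS : S.Finite)
    {P : ∀ F, ExpandingBranches F → Prop} (h : ∀ F ∈ S, ∃ X, P F X) :
    ∃ D I δ, 0 < δ ∧ ∀ F ∈ S, ∃ X, P F X ∧ X.distortion ≤ D ∧ X.totalWeight ≤ I ∧
      δ ≤ X.minImage := by
  induction S, hS using Set.Finite.induction_on with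
  | empty => exact ⟨0, 0, 1, one_pos, by simp⟩
  | @insert F₀ S _ _ ih =>
    obtain ⟨D, I, δ, hδ, hS⟩ := ih fun F hF => h F (mem_insert_of_mem _ hF)
    obtain ⟨X₀, hX₀⟩ := h F₀ (mem_insert _ _)
    refine ⟨max D X₀.distortion, max I X₀.totalWeight, min δ X₀.minImage,
      lt_min hδ X₀.minImage_pos, ?_⟩
    rintro F (rfl | hF)
    · exact ⟨X₀, hX₀, le_max_right _ _, le_max_right _ _, min_le_right _ _⟩
    · obtain ⟨X, hX, hD, hI, hδX⟩ := hS F hF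
      exact ⟨X, hX, hD.trans (le_max_left _ _), hI.trans (le_max_left _ _),
        (min_le_left _ _).trans hδX⟩

theorem exists_comp_le {F S : ℝ → ℝ} (X : ExpandingBranches F) (B : ExpandingBranches S)
    {lam D I : ℝ} (hX : lam ≤ X.expansion) (hXD : X.distortion ≤ D) (hXI : X.totalWeight ≤ I)
    (hB : 4 ≤ B.expansion) (hBD : 4 * B.distortion ≤ 3 * D)
    (hBI : 2 * Real.exp D / B.minImage ≤ I) :
    ∃ Z : ExpandingBranches (S ∘ F), lam ≤ Z.expansion ∧ Z.distortion ≤ D ∧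
      Z.totalWeight ≤ I := by
  obtain ⟨Z, hZ, hZD, hZI⟩ := X.exists_comp B
  have hD0 : 0 ≤ D := X.distortion_nonneg.trans hXD
  have hI0 : 0 ≤ X.totalWeight := X.totalWeight_nonneg
  have hcomp : X.compDistortion B ≤ D := by
    have : X.distortion / B.expansion ≤ D / 4 := div_le_div₀ hD0 hXD (by norm_num) hB
    rw [compDistortion]
    linarith
  refine ⟨Z, ?_, hZD ▸ hcomp, hZI.trans ?_⟩
  · rw [hZ]
    exact hX.trans (le_mul_of_one_le_right X.expansion_pos.le (by linarith))
  · have h1 : 2 / B.expansion * X.totalWeight ≤ I / 2 := by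
      rw [div_mul_eq_mul_div, div_le_iff₀ (by linarith)]
      nlinarith
    have h2 : Real.exp (X.compDistortion B) / B.minImage ≤ I / 2 := by
      have := div_le_div_of_nonneg_right (Real.exp_le_exp.2 hcomp) B.minImage_pos.le
      rw [mul_div_assoc] at hBI
      linarith
    linarith

end ExpandingBranches

section RandomComposition

variable {m : ℕ} (T : Fin m → ℝ → ℝ)

theorem randComp_add (ω : Om m) (a b : ℕ) :
    randComp T ω (a + b) = randComp T (fun k => ω (k + a)) b ∘ randComp T ω a := by
  induction b with
  | zero => rfl
  | succ k ih =>
    funext x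
    change T (ω ((a + k : ℕ) : ℤ)) (randComp T ω (a + k) x) = _
    rw [ih, show ((a + k : ℕ) : ℤ) = (k : ℤ) + (a : ℤ) by push_cast; ring]
    rfl

theorem finite_range_randComp (n : ℕ) : (Set.range fun ω : Om m => randComp T ω n).Finite := by
  induction n with
  | zero => exact (finite_singleton _).subset (range_const_subset)
  | succ n ih =>
    refine (Set.finite_univ.image2 (fun i G => T i ∘ G) ih).subset ?_
    rintro _ ⟨ω, rfl⟩
    exact ⟨ω n, mem_univ _, _, ⟨ω, rfl⟩, rfl⟩

variable {T}

theorem exists_expandingBranches_randComp {lam : ℝ}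
    (hT : ∀ i, ∃ X : ExpandingBranches (T i), X.expansion = lam) (ω : Om m) {n : ℕ}
    (hn : 1 ≤ n) : ∃ X : ExpandingBranches (randComp T ω n), lam ^ n ≤ X.expansion := by
  induction n, hn using Nat.le_induction with
  | base =>
    obtain ⟨X, hX⟩ := hT (ω 0)
    exact ⟨X, by rw [hX, pow_one]⟩
  | succ n hn ih =>
    obtain ⟨X, hX⟩ := ih
    obtain ⟨Y, hY⟩ := hT (ω n)
    obtain ⟨Z, hZ, -⟩ := X.exists_comp Y
    refine ⟨Z, ?_⟩
    rw [hZ, hY, pow_succ]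
    exact mul_le_mul_of_nonneg_right hX (hY ▸ Y.expansion_pos.le)

end RandomComposition

theorem exists_uniform_bounds_randComp {m : ℕ} {T : Fin m → ℝ → ℝ} {lam : ℝ} (hlam : 1 < lam)
    (hT : ∀ i, PiecewiseC2Expanding (T i) lam)
    (hmaps : ∀ i, MapsTo (T i) (Icc 0 1) (Icc 0 1)) :
    ∃ D I, 0 < I ∧ ∀ n, 1 ≤ n → ∀ ω : Om m, ∃ X : ExpandingBranches (randComp T ω n),
      lam ≤ X.expansion ∧ X.distortion ≤ D ∧ X.totalWeight ≤ I := by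
  have hword := exists_expandingBranches_randComp fun i =>
    ExpandingBranches.exists_of_piecewiseC2Expanding hlam (hT i) (hmaps i)
  obtain ⟨n₀, hn₀⟩ := pow_unbounded_of_one_lt 4 hlam
  have hn₀1 : 1 ≤ n₀ := Nat.one_le_iff_ne_zero.2 fun h => by norm_num [h] at hn₀
  obtain ⟨DB, _, δ, hδ, hblock⟩ := ExpandingBranches.exists_uniform_bounds
    (finite_range_randComp T n₀) (P := fun _ X => 4 ≤ X.expansion) <| by
      rintro _ ⟨ω, rfl⟩
      obtain ⟨X, hX⟩ := hword ω hn₀1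
      exact ⟨X, hn₀.le.trans hX⟩
  obtain ⟨D₀, I₀, _, -, hshort⟩ := ExpandingBranches.exists_uniform_bounds
    ((finite_Icc 1 n₀).biUnion fun n _ => finite_range_randComp T n)
    (P := fun _ X => lam ≤ X.expansion) <| by
      simp only [mem_iUnion, mem_range]
      rintro _ ⟨n, hn, ω, rfl⟩
      obtain ⟨X, hX⟩ := hword ω hn.1
      exact ⟨X, (le_self_pow₀ hlam.le (Nat.one_le_iff_ne_zero.1 hn.1)).trans hX⟩
  set D := max D₀ (4 / 3 * DB)
  set I := max I₀ (2 * Real.exp D / δ)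
  refine ⟨D, I, lt_max_of_lt_right (by positivity), fun n hn => ?_⟩
  induction n using Nat.strong_induction_on with
  | _ n ih =>
    intro ω
    by_cases hn₀n : n ≤ n₀
    · obtain ⟨X, hX, hXD, hXI, -⟩ := hshort _ (mem_biUnion ⟨hn, hn₀n⟩ ⟨ω, rfl⟩)
      exact ⟨X, hX, hXD.trans (le_max_left _ _), hXI.trans (le_max_left _ _)⟩
    · obtain ⟨X, hX, hXD, hXI⟩ := ih (n - n₀) (by omega) (by omega) ω
      obtain ⟨B, hB, hBD, -, hBδ⟩ := hblock _ ⟨fun k => ω (k + (n - n₀ : ℕ)), rfl⟩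
      have hBI : 2 * Real.exp D / B.minImage ≤ I :=
        (div_le_div_of_nonneg_left (by positivity) hδ hBδ).trans (le_max_right _ _)
      have := X.exists_comp_le B hX hXD hXI hB (by linarith [le_max_right D₀ (4 / 3 * DB)]) hBI
      rwa [← randComp_add, Nat.sub_add_cancel (by omega)] at this

theorem stmt6_general (m : ℕ) (T : Fin m → ℝ → ℝ) (lam : ℝ) (hlam : 1 < lam)
    (hT : ∀ i, PiecewiseC2Expanding (T i) lam)
    (hmaps : ∀ i, Set.MapsTo (T i) (Set.Icc 0 1) (Set.Icc 0 1)) :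
    ∃ C : ℝ, 0 < C ∧ ∀ (ω : Om m) (n : ℕ), 1 ≤ n → ∀ ε : ℝ, 0 < ε →
      mLeb {x | |randComp T ω n x - x| ≤ ε} ≤ ENNReal.ofReal (C * ε) := by
  obtain ⟨_, I, hI, hbound⟩ := exists_uniform_bounds_randComp hlam hT hmaps
  have hfac : 0 < 2 * lam / (lam - 1) := div_pos (by linarith) (sub_pos.2 hlam)
  refine ⟨2 * lam / (lam - 1) * I, mul_pos hfac hI, fun ω n hn ε hε => ?_⟩
  obtain ⟨X, hX, -, hXI⟩ := hbound n hn ω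
  rw [mLeb, Measure.restrict_apply' measurableSet_Icc]
  refine (X.volume_nearFixed_le hlam hX hε.le).trans (ENNReal.ofReal_le_ofReal ?_)
  gcongr

theorem stmt6 (m : ℕ) (hm : 1 ≤ m) (T : Fin m → ℝ → ℝ) (lam : ℝ) (hlam : 1 < lam)
    (hT : ∀ i, PiecewiseC2Expanding (T i) lam)
    (hmaps : ∀ i, Set.MapsTo (T i) (Set.Icc 0 1) (Set.Icc 0 1)) :
    ∃ C : ℝ, 0 < C ∧ ∀ (ω : Om m) (n : ℕ), 1 ≤ n → ∀ ε : ℝ, 0 < ε →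
      mLeb {x | |randComp T ω n x - x| ≤ ε} ≤ ENNReal.ofReal (C * ε) :=
  stmt6_general m T lam hlam hT hmaps
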